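/- Let P be a probability measure on ℝ^p × ℝ^q with finite second moments whose covariance matrices Σ_X and Σ_Y are positive definite, and fix a point o = (x, y) ∈ ℝ^p × ℝ^q. For ε ∈ [0,1] let P_ε = (1−ε)P + ε δ_o, where δ_o is the Dirac measure at o. Then for all sufficiently small ε ≥ 0 the covariance matrices Σ_X(P_ε) and Σ_Y(P_ε) are positive definite, so Φ(P_ε) = tr(Σ_X(P_ε)^{-1} Σ_XY(P_ε) Σ_Y(P_ε)^{-1} Σ_YX(P_ε)) is well defined, and the map ε ↦ Φ(P_ε) is differentiable from the right at ε = 0 with right derivative equal to −(x−μ_X)ᵀ Σ_X^{-1} Σ_XY Σ_Y^{-1} Σ_YX Σ_X^{-1} (x−μ_X) − (y−μ_Y)ᵀ Σ_Y^{-1} Σ_YX Σ_X^{-1} Σ_XY Σ_Y^{-1} (y−μ_Y) + 2 (y−μ_Y)ᵀ Σ_Y^{-1} Σ_YX Σ_X^{-1} (x−μ_X), where all means and covariances on the right are those of P. -/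

import Mathlib

open Matrix MeasureTheory

noncomputable section

/-- Squared Frobenius norm of a real matrix: `‖M‖_F² = tr (M Mᵀ)`. -/
def frobSq {m n : Type*} [Fintype m] [Fintype n] (M : Matrix m n ℝ) : ℝ :=
  Matrix.trace (M * Mᵀ)

/-- Frobenius norm of a real matrix. -/
def frobNorm {m n : Type*} [Fintype m] [Fintype n] (M : Matrix m n ℝ) : ℝ :=
  Real.sqrt (frobSq M)

open Classical in
/-- `A^{-1/2}`: the inverse of the unique positive definite square root of a positive
definite matrix `A` (junk value `0` if `A` is not positive definite). -/
def invSqrt {n : Type*} [Fintype n] [DecidableEq n] (A : Matrix n n ℝ) : Matrix n n ℝ :=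
  if h : A.PosDef then
    ((h.posSemidef.1.eigenvectorUnitary : Matrix n n ℝ) *
      Matrix.diagonal ((↑) ∘ (Real.sqrt ·) ∘ h.posSemidef.1.eigenvalues) *
      (star h.posSemidef.1.eigenvectorUnitary : Matrix n n ℝ))⁻¹ else 0

variable {p q : ℕ}

/-- Mean vector `μ_X` of the first component under `P`. -/
def meanX (P : Measure ((Fin p → ℝ) × (Fin q → ℝ))) : Fin p → ℝ :=
  fun i => ∫ o, o.1 i ∂P

/-- Mean vector `μ_Y` of the second component under `P`. -/
def meanY (P : Measure ((Fin p → ℝ) × (Fin q → ℝ))) : Fin q → ℝ :=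
  fun j => ∫ o, o.2 j ∂P

/-- Covariance matrix `Σ_X` of the first component under `P`, defined entrywise. -/
def covX (P : Measure ((Fin p → ℝ) × (Fin q → ℝ))) : Matrix (Fin p) (Fin p) ℝ :=
  Matrix.of fun i i' => ∫ o, (o.1 i - meanX P i) * (o.1 i' - meanX P i') ∂P

/-- Covariance matrix `Σ_Y` of the second component under `P`, defined entrywise. -/
def covY (P : Measure ((Fin p → ℝ) × (Fin q → ℝ))) : Matrix (Fin q) (Fin q) ℝ :=
  Matrix.of fun j j' => ∫ o, (o.2 j - meanY P j) * (o.2 j' - meanY P j') ∂P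

/-- Cross-covariance matrix `Σ_XY` under `P`, defined entrywise. -/
def covXY (P : Measure ((Fin p → ℝ) × (Fin q → ℝ))) : Matrix (Fin p) (Fin q) ℝ :=
  Matrix.of fun i j => ∫ o, (o.1 i - meanX P i) * (o.2 j - meanY P j) ∂P

/-- The Pillai trace `Φ(P) = tr (Σ_X⁻¹ Σ_XY Σ_Y⁻¹ Σ_YX)` of `P`. -/
def pillai (P : Measure ((Fin p → ℝ) × (Fin q → ℝ))) : ℝ :=
  Matrix.trace ((covX P)⁻¹ * covXY P * (covY P)⁻¹ * (covXY P)ᵀ)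

/-- The Dirac contamination `P_ε = (1−ε) P + ε δ_o`. -/
def pert (P : Measure ((Fin p → ℝ) × (Fin q → ℝ))) (o : (Fin p → ℝ) × (Fin q → ℝ)) (ε : ℝ) :
    Measure ((Fin p → ℝ) × (Fin q → ℝ)) :=
  ENNReal.ofReal (1 - ε) • P + ENNReal.ofReal ε • Measure.dirac o

/-!
Under `P_ε = (1 - ε) P + ε δ_o` every (cross-)covariance matrix moves along the explicit curve
`(1 - ε) Σ + ε (1 - ε) u vᵀ`, where `u`, `v` are the deviations of `o` from the means of `P`;
for `ε < 1` the diagonal blocks stay positive definite, having only gained a rank-one positive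
semidefinite term. Hence `Φ(P_ε)` is, for `ε ∈ [0, 1]`, a smooth function of `ε` built from
products, transposes and inverses of such curves, and its derivative at `0` follows from the
product rule and `(M⁻¹)' = -M⁻¹ M' M⁻¹`. In the result the four copies of `Φ(P)` cancel and the
rank-one perturbations leave the three quadratic forms in `x - μ_X` and `y - μ_Y`.
-/

open ProbabilityTheory

section MatrixCalculus

-- The Frobenius norm only serves the proofs: it induces the product topology on matrices, which is
-- the one the statements' `HasDerivAt` refers to.
open scoped Matrix.Norms.Frobenius

variable {m n k : Type*} [Fintype m] [Fintype n] [Fintype k] {t : ℝ}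

theorem HasDerivAt.matrix_mul {M : ℝ → Matrix m n ℝ} {N : ℝ → Matrix n k ℝ} {M' : Matrix m n ℝ}
    {N' : Matrix n k ℝ} (hM : HasDerivAt M M' t) (hN : HasDerivAt N N' t) :
    HasDerivAt (fun ε => M ε * N ε) (M' * N t + M t * N') t := by
  rw [add_comm]
  exact (mulLinearMap ℝ : Matrix m n ℝ →ₗ[ℝ] _ →ₗ[ℝ] Matrix m k ℝ).toContinuousBilinearMap
    |>.hasDerivAt_of_bilinear (fun _ => hM) (fun _ => hN)

theorem HasDerivAt.matrix_transpose {M : ℝ → Matrix m n ℝ} {M' : Matrix m n ℝ}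
    (hM : HasDerivAt M M' t) : HasDerivAt (fun ε => (M ε)ᵀ) M'ᵀ t :=
  (transposeLinearEquiv m n ℝ ℝ).toLinearMap.toContinuousLinearMap.hasFDerivAt.comp_hasDerivAt t hM

theorem HasDerivAt.matrix_trace {M : ℝ → Matrix m m ℝ} {M' : Matrix m m ℝ}
    (hM : HasDerivAt M M' t) : HasDerivAt (fun ε => (M ε).trace) M'.trace t :=
  (traceLinearMap m ℝ ℝ).toContinuousLinearMap.hasFDerivAt.comp_hasDerivAt t hM

theorem HasDerivAt.matrix_inv [DecidableEq m] {M : ℝ → Matrix m m ℝ} {M' : Matrix m m ℝ}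
    (hM : HasDerivAt M M' t) (ht : IsUnit (M t).det) :
    HasDerivAt (fun ε => (M ε)⁻¹) (-((M t)⁻¹ * M' * (M t)⁻¹)) t := by
  obtain ⟨u, hu⟩ := (isUnit_iff_isUnit_det _).2 ht
  have := (hu ▸ hasFDerivAt_ringInverse (𝕜 := ℝ) u).comp_hasDerivAt t hM
  simp only [Function.comp_def, ← nonsing_inv_eq_ringInverse, _root_.neg_apply,
    ContinuousLinearMap.mulLeftRight_apply, coe_units_inv, hu] at this
  exact this

end MatrixCalculus

section Contamination

variable {Ω : Type*} [MeasurableSpace Ω] {μ : Measure Ω} {ω₀ : Ω} {ε : ℝ}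

def contamination (μ : Measure Ω) (ω₀ : Ω) (ε : ℝ) : Measure Ω :=
  ENNReal.ofReal (1 - ε) • μ + ENNReal.ofReal ε • Measure.dirac ω₀

lemma isProbabilityMeasure_contamination [IsProbabilityMeasure μ] (hε₀ : 0 ≤ ε) (hε₁ : ε ≤ 1) :
    IsProbabilityMeasure (contamination μ ω₀ ε) := by
  constructor
  simp only [contamination, Measure.add_apply, Measure.smul_apply, measure_univ, smul_eq_mul,
    mul_one]
  rw [← ENNReal.ofReal_add (by linarith) hε₀]
  norm_num

variable [MeasurableSingletonClass Ω]

lemma integrable_contamination {f : Ω → ℝ} (hf : Integrable f μ) :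
    Integrable f (contamination μ ω₀ ε) :=
  (hf.smul_measure ENNReal.ofReal_ne_top).add_measure
    ((integrable_dirac (by simp)).smul_measure ENNReal.ofReal_ne_top)

lemma integral_contamination {f : Ω → ℝ} (hf : Integrable f μ) (hε₀ : 0 ≤ ε) (hε₁ : ε ≤ 1) :
    ∫ ω, f ω ∂(contamination μ ω₀ ε) = (1 - ε) * ∫ ω, f ω ∂μ + ε * f ω₀ := by
  rw [contamination, integral_add_measure (hf.smul_measure ENNReal.ofReal_ne_top)
      ((integrable_dirac (by simp)).smul_measure ENNReal.ofReal_ne_top),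
    integral_smul_measure, integral_smul_measure, integral_dirac,
    ENNReal.toReal_ofReal (by linarith), ENNReal.toReal_ofReal hε₀, smul_eq_mul, smul_eq_mul]

lemma memLp_two_contamination {f : Ω → ℝ} (hf : MemLp f 2 μ) :
    MemLp f 2 (contamination μ ω₀ ε) := by
  have hmeas : AEStronglyMeasurable f (contamination μ ω₀ ε) :=
    (hf.1.smul_measure _).add_measure (aestronglyMeasurable_dirac.smul_measure _)
  rw [memLp_two_iff_integrable_sq_norm hmeas]
  exact integrable_contamination (hf.integrable_norm_pow two_ne_zero)

lemma covariance_contamination [IsProbabilityMeasure μ] {X Y : Ω → ℝ} (hX : MemLp X 2 μ)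
    (hY : MemLp Y 2 μ) (hε₀ : 0 ≤ ε) (hε₁ : ε ≤ 1) :
    cov[X, Y; contamination μ ω₀ ε] =
      (1 - ε) * cov[X, Y; μ] + ε * (1 - ε) * ((X ω₀ - μ[X]) * (Y ω₀ - μ[Y])) := by
  have := isProbabilityMeasure_contamination (μ := μ) (ω₀ := ω₀) hε₀ hε₁
  rw [covariance_eq_sub (memLp_two_contamination hX) (memLp_two_contamination hY),
    covariance_eq_sub hX hY, integral_contamination (hX.integrable_mul hY) hε₀ hε₁,
    integral_contamination (hX.integrable one_le_two) hε₀ hε₁,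
    integral_contamination (hY.integrable one_le_two) hε₀ hε₁, Pi.mul_apply]
  ring

end Contamination

section CovarianceCurve

variable {ι κ : Type*} {Ω : Type*} [MeasurableSpace Ω]

def crossCovMatrix (X : ι → Ω → ℝ) (Y : κ → Ω → ℝ) (μ : Measure Ω) : Matrix ι κ ℝ :=
  of fun i j => cov[X i, Y j; μ]

def contaminatedCov (S V : Matrix ι κ ℝ) (ε : ℝ) : Matrix ι κ ℝ :=
  (1 - ε) • S + (ε * (1 - ε)) • V

lemma crossCovMatrix_contamination [MeasurableSingletonClass Ω] {μ : Measure Ω}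
    [IsProbabilityMeasure μ] {X : ι → Ω → ℝ} {Y : κ → Ω → ℝ} (hX : ∀ i, MemLp (X i) 2 μ)
    (hY : ∀ j, MemLp (Y j) 2 μ) (ω₀ : Ω) {ε : ℝ} (hε₀ : 0 ≤ ε) (hε₁ : ε ≤ 1) :
    crossCovMatrix X Y (contamination μ ω₀ ε) =
      contaminatedCov (crossCovMatrix X Y μ)
        (vecMulVec (fun i => X i ω₀ - μ[X i]) (fun j => Y j ω₀ - μ[Y j])) ε := by
  ext i j
  simp only [crossCovMatrix, contaminatedCov, of_apply, Matrix.add_apply, Matrix.smul_apply,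
    vecMulVec_apply, smul_eq_mul]
  rw [covariance_contamination (hX i) (hY j) hε₀ hε₁]

lemma contaminatedCov_zero (S V : Matrix ι κ ℝ) : contaminatedCov S V 0 = S := by
  simp [contaminatedCov]

open scoped Matrix.Norms.Frobenius in
lemma hasDerivAt_contaminatedCov [Fintype ι] [Fintype κ] (S V : Matrix ι κ ℝ) :
    HasDerivAt (contaminatedCov S V) (V - S) 0 := by
  have h₁ : HasDerivAt (fun ε : ℝ => 1 - ε) (-1) 0 := (hasDerivAt_id 0).const_sub 1
  have h₂ : HasDerivAt (fun ε : ℝ => ε * (1 - ε)) 1 0 := by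
    simpa using (hasDerivAt_id (0 : ℝ)).fun_mul h₁
  exact ((h₁.smul_const S).add (h₂.smul_const V)).congr_deriv (by
    rw [neg_one_smul, one_smul, neg_add_eq_sub])

lemma Matrix.PosDef.contaminatedCov [Fintype ι] {S : Matrix ι ι ℝ} (hS : S.PosDef) (u : ι → ℝ)
    {ε : ℝ} (hε₀ : 0 ≤ ε) (hε₁ : ε < 1) : (contaminatedCov S (vecMulVec u u) ε).PosDef := by
  have hu : (vecMulVec u u).PosSemidef := by
    simpa using posSemidef_vecMulVec_self_star u
  exact (hS.smul (by linarith)).add_posSemidef (hu.smul (mul_nonneg hε₀ (by linarith)))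

end CovarianceCurve

section PillaiDerivative

variable {m n : Type*} [Fintype m] [Fintype n]

lemma dotProduct_vecMul_eq_vecMul_transpose_dotProduct {R : Type*} [CommSemiring R]
    (u : n → R) (N : Matrix m n R) (w : m → R) : u ⬝ᵥ (w ᵥ* N) = (u ᵥ* Nᵀ) ⬝ᵥ w := by
  rw [← mulVec_transpose, dotProduct_mulVec]

variable [DecidableEq m] [DecidableEq n]

theorem hasDerivAt_trace_contaminatedCov {A : Matrix m m ℝ} {B : Matrix m n ℝ} {C : Matrix n n ℝ}
    (hA : A.IsSymm) (hAdet : IsUnit A.det) (hC : C.IsSymm) (hCdet : IsUnit C.det)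
    (a : m → ℝ) (b : n → ℝ) :
    HasDerivAt (fun ε => ((contaminatedCov A (vecMulVec a a) ε)⁻¹ *
        contaminatedCov B (vecMulVec a b) ε * (contaminatedCov C (vecMulVec b b) ε)⁻¹ *
        (contaminatedCov B (vecMulVec a b) ε)ᵀ).trace)
      (-(a ⬝ᵥ ((A⁻¹ * B * C⁻¹ * Bᵀ * A⁻¹) *ᵥ a)) - b ⬝ᵥ ((C⁻¹ * Bᵀ * A⁻¹ * B * C⁻¹) *ᵥ b)
        + 2 * (b ⬝ᵥ ((C⁻¹ * Bᵀ * A⁻¹) *ᵥ a))) 0 := by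
  have dA := hasDerivAt_contaminatedCov A (vecMulVec a a)
  have dB := hasDerivAt_contaminatedCov B (vecMulVec a b)
  have dC := hasDerivAt_contaminatedCov C (vecMulVec b b)
  rw [← contaminatedCov_zero A (vecMulVec a a)] at hAdet
  rw [← contaminatedCov_zero C (vecMulVec b b)] at hCdet
  have hderiv := ((((dA.matrix_inv hAdet).matrix_mul dB).matrix_mul
    (dC.matrix_inv hCdet)).matrix_mul dB.matrix_transpose).matrix_trace
  simp only [contaminatedCov_zero] at hderiv hAdet hCdet
  refine hderiv.congr_deriv ?_
  have hAinv : (A⁻¹)ᵀ = A⁻¹ := by rw [transpose_nonsing_inv, hA.eq]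
  have hCinv : (C⁻¹)ᵀ = C⁻¹ := by rw [transpose_nonsing_inv, hC.eq]
  -- Each of the four product-rule terms is `± Φ` plus the trace of a rank-one matrix, i.e. a
  -- bilinear form in `a`, `b`; the four `± Φ` cancel.
  simp only [Matrix.mul_sub, Matrix.sub_mul, Matrix.add_mul, Matrix.mul_neg, Matrix.neg_mul,
    transpose_sub, transpose_vecMulVec, Matrix.mul_assoc, nonsing_inv_mul_cancel_left _ _ hAdet,
    nonsing_inv_mul_cancel_left _ _ hCdet, trace_add, trace_sub, trace_neg, vecMulVec_mul,
    mul_vecMulVec, trace_vecMulVec]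
  simp only [← vecMul_transpose, dotProduct_vecMul_eq_vecMul_transpose_dotProduct, vecMul_vecMul,
    transpose_mul, transpose_transpose, hAinv, hCinv, Matrix.mul_assoc]
  have hcross : a ᵥ* (A⁻¹ * (B * C⁻¹)) ⬝ᵥ b = b ᵥ* (C⁻¹ * (Bᵀ * A⁻¹)) ⬝ᵥ a := by
    rw [← dotProduct_vecMul_transpose]
    simp only [transpose_mul, hAinv, hCinv, Matrix.mul_assoc]
  rw [hcross]
  ring

end PillaiDerivative

section PillaiContamination

variable {P : Measure ((Fin p → ℝ) × (Fin q → ℝ))} [IsProbabilityMeasure P]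
  (o : (Fin p → ℝ) × (Fin q → ℝ)) {ε : ℝ}

-- `covX`, `covY`, `covXY` are `crossCovMatrix` of the coordinate maps, and `pert` is
-- `contamination`, by definition.
lemma covX_pert (hX : ∀ i, MemLp (fun z : (Fin p → ℝ) × (Fin q → ℝ) => z.1 i) 2 P)
    (hε₀ : 0 ≤ ε) (hε₁ : ε ≤ 1) :
    covX (pert P o ε) = contaminatedCov (covX P)
      (vecMulVec (fun i => o.1 i - meanX P i) (fun i => o.1 i - meanX P i)) ε :=
  crossCovMatrix_contamination hX hX o hε₀ hε₁

lemma covY_pert (hY : ∀ j, MemLp (fun z : (Fin p → ℝ) × (Fin q → ℝ) => z.2 j) 2 P)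
    (hε₀ : 0 ≤ ε) (hε₁ : ε ≤ 1) :
    covY (pert P o ε) = contaminatedCov (covY P)
      (vecMulVec (fun j => o.2 j - meanY P j) (fun j => o.2 j - meanY P j)) ε :=
  crossCovMatrix_contamination hY hY o hε₀ hε₁

lemma covXY_pert (hX : ∀ i, MemLp (fun z : (Fin p → ℝ) × (Fin q → ℝ) => z.1 i) 2 P)
    (hY : ∀ j, MemLp (fun z : (Fin p → ℝ) × (Fin q → ℝ) => z.2 j) 2 P)
    (hε₀ : 0 ≤ ε) (hε₁ : ε ≤ 1) :
    covXY (pert P o ε) = contaminatedCov (covXY P)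
      (vecMulVec (fun i => o.1 i - meanX P i) (fun j => o.2 j - meanY P j)) ε :=
  crossCovMatrix_contamination hX hY o hε₀ hε₁

lemma pillai_pert (hX : ∀ i, MemLp (fun z : (Fin p → ℝ) × (Fin q → ℝ) => z.1 i) 2 P)
    (hY : ∀ j, MemLp (fun z : (Fin p → ℝ) × (Fin q → ℝ) => z.2 j) 2 P)
    (hε₀ : 0 ≤ ε) (hε₁ : ε ≤ 1) :
    let a := fun i => o.1 i - meanX P i
    let b := fun j => o.2 j - meanY P j
    pillai (pert P o ε) =
      ((contaminatedCov (covX P) (vecMulVec a a) ε)⁻¹ *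
        contaminatedCov (covXY P) (vecMulVec a b) ε *
        (contaminatedCov (covY P) (vecMulVec b b) ε)⁻¹ *
        (contaminatedCov (covXY P) (vecMulVec a b) ε)ᵀ).trace := by
  rw [pillai, covX_pert o hX hε₀ hε₁, covY_pert o hY hε₀ hε₁, covXY_pert o hX hY hε₀ hε₁]

end PillaiContamination

/-- Von Mises derivative of the Pillai trace `Φ` under Dirac contamination
`P_ε = (1−ε)P + εδ_o`: for small `ε ≥ 0` the covariance matrices of `P_ε` remain positive
definite and `ε ↦ Φ(P_ε)` has the stated right derivative at `ε = 0` (the canonical gradient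
of the Pillai trace evaluated at `o`). -/
theorem pillai_canonical_gradient (p q : ℕ)
    (P : Measure ((Fin p → ℝ) × (Fin q → ℝ))) [IsProbabilityMeasure P]
    (hX2 : Integrable (fun o => ‖o.1‖ ^ 2) P) (hY2 : Integrable (fun o => ‖o.2‖ ^ 2) P)
    (hX : (covX P).PosDef) (hY : (covY P).PosDef)
    (o : (Fin p → ℝ) × (Fin q → ℝ)) :
    (∃ ε₀ > (0 : ℝ), ∀ ε : ℝ, 0 ≤ ε → ε < ε₀ →
        (covX (pert P o ε)).PosDef ∧ (covY (pert P o ε)).PosDef) ∧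
      HasDerivWithinAt (fun ε => pillai (pert P o ε))
        (-((fun i => o.1 i - meanX P i) ⬝ᵥ
              (((covX P)⁻¹ * covXY P * (covY P)⁻¹ * (covXY P)ᵀ * (covX P)⁻¹).mulVec
                (fun i => o.1 i - meanX P i)))
          - ((fun j => o.2 j - meanY P j) ⬝ᵥ
              (((covY P)⁻¹ * (covXY P)ᵀ * (covX P)⁻¹ * covXY P * (covY P)⁻¹).mulVec
                (fun j => o.2 j - meanY P j)))
          + 2 * ((fun j => o.2 j - meanY P j) ⬝ᵥ
              (((covY P)⁻¹ * (covXY P)ᵀ * (covX P)⁻¹).mulVec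
                (fun i => o.1 i - meanX P i))))
        (Set.Ici 0) 0 := by
  have hXi : ∀ i, MemLp (fun z : (Fin p → ℝ) × (Fin q → ℝ) => z.1 i) 2 P :=
    ((memLp_two_iff_integrable_sq_norm measurable_fst.aestronglyMeasurable).2 hX2).eval
  have hYj : ∀ j, MemLp (fun z : (Fin p → ℝ) × (Fin q → ℝ) => z.2 j) 2 P :=
    ((memLp_two_iff_integrable_sq_norm measurable_snd.aestronglyMeasurable).2 hY2).eval
  refine ⟨⟨1, one_pos, fun ε h₀ h₁ => ?_⟩, ?_⟩
  · rw [covX_pert o hXi h₀ h₁.le, covY_pert o hYj h₀ h₁.le]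
    exact ⟨hX.contaminatedCov _ h₀ h₁, hY.contaminatedCov _ h₀ h₁⟩
  have hderiv := hasDerivAt_trace_contaminatedCov (B := covXY P)
    (isHermitian_iff_isSymm.1 hX.isHermitian) ((isUnit_iff_isUnit_det _).1 hX.isUnit)
    (isHermitian_iff_isSymm.1 hY.isHermitian) ((isUnit_iff_isUnit_det _).1 hY.isUnit)
    (fun i => o.1 i - meanX P i) (fun j => o.2 j - meanY P j)
  refine hderiv.hasDerivWithinAt.congr_of_eventuallyEq ?_
    (pillai_pert o hXi hYj le_rfl zero_le_one)
  filter_upwards [Icc_mem_nhdsGE zero_lt_one] with ε hε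
  exact pillai_pert o hXi hYj hε.1 hε.2
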